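/- For classes U and W on the same level i of the profile tree T, if U ≠ W then gl(U) ≠ gl(W); that is, the global labeling gl assigns distinct labels to distinct classes on the same level. -/

import Mathlib

/-!
Profile trees for Büchi determinization (Fisman–Kupferman–Vardi–Wilke style profiles).
Common definitions: nondeterministic Büchi word automata (NBW), the run DAG `G`,
profiles of nodes, and the pruned run DAG `G'`.
-/

/-- A nondeterministic Büchi word automaton `A = (Alph, Q, Qin, ρ, F)` with `Qin ∩ F = ∅`. -/
structure NBW (Alph Q : Type*) where
  Qin : Set Q
  ρ : Q → Alph → Set Q
  F : Set Q
  disj : Qin ∩ F = ∅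

variable {Alph Q : Type*} (A : NBW Alph Q) (w : ℕ → Alph)

/-- Lexicographic order `L₁ ≤ L₂` on profiles (lists over ℕ). -/
def lexLE (L₁ L₂ : List ℕ) : Prop :=
  List.Lex (· < ·) L₁ L₂ ∨ L₁ = L₂

/-- Strict lexicographic order `L₁ < L₂` on profiles. -/
def lexLT (L₁ L₂ : List ℕ) : Prop :=
  List.Lex (· < ·) L₁ L₂

open Classical in
/-- The profiles of all finite initial runs of `A` (on `w`) to the node `v = (q, i)`:
for each run `p₀,…,p_i` with `p₀ ∈ Qin`, `p_{j+1} ∈ ρ(p_j, w_j)` and `p_i = q`, the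
sequence of `F`-visitation labels `f(p₀,0) ⋯ f(p_i,i)` (where `f` is 1 on `F`-nodes, else 0). -/
def runProfiles (v : Q × ℕ) : Set (List ℕ) :=
  { L | ∃ p : ℕ → Q, p 0 ∈ A.Qin ∧ (∀ j < v.2, p (j + 1) ∈ A.ρ (p j) (w j)) ∧
        p v.2 = v.1 ∧ L = (List.range (v.2 + 1)).map (fun j => if p j ∈ A.F then 1 else 0) }

/-- `v` is a node of the run DAG `G = (V, E)` (equivalently of the pruned DAG `G'`):
there is a finite run of `A` to `v.1` on `w₀ ⋯ w_{v.2 - 1}`. -/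
def memV (v : Q × ℕ) : Prop := (runProfiles A w v).Nonempty

/-- `L` is the lexicographically maximal profile among all initial paths to `v`. -/
def IsMaxProfile (v : Q × ℕ) (L : List ℕ) : Prop :=
  L ∈ runProfiles A w v ∧ ∀ L' ∈ runProfiles A w v, lexLE L' L

open Classical in
/-- The profile `h_v` of a node `v`: the lexicographically maximal profile of an
initial path to `v` (junk value `[]` if `v` is not a node of the DAG). -/
noncomputable def profile (v : Q × ℕ) : List ℕ :=
  if h : ∃ L, IsMaxProfile A w v L then h.choose else []

/-- The edge relation `E` of the run DAG `G`: `E((q,i), (q',i+1))` iff `(q,i) ∈ V`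
and `q' ∈ ρ(q, w_i)`. -/
def edgeG (u v : Q × ℕ) : Prop :=
  memV A w u ∧ v.2 = u.2 + 1 ∧ v.1 ∈ A.ρ u.1 (w u.2)

/-- The edge relation `E'` of the pruned run DAG `G'`: `(u,v) ∈ E` and every
`E`-parent `u'` of `v` satisfies `h_{u'} ≤ h_u`. -/
def edgeG' (u v : Q × ℕ) : Prop :=
  edgeG A w u v ∧ ∀ u', edgeG A w u' v → lexLE (profile A w u') (profile A w u)

/-- The equivalence class (under equality of profiles, levelwise) of a node `u` of `G'`. -/
def classOf (u : Q × ℕ) : Set (Q × ℕ) :=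
  { v | memV A w v ∧ v.2 = u.2 ∧ profile A w v = profile A w u }

/-- `C` is a class (node) of the profile tree `T` on level `i`. -/
def ClassAt (C : Set (Q × ℕ)) (i : ℕ) : Prop :=
  ∃ u, memV A w u ∧ u.2 = i ∧ C = classOf A w u

/-- The child relation of the profile tree `T`: `[v]` is a child of `[u]`
whenever `(u, v) ∈ E'`. -/
def childC (C D : Set (Q × ℕ)) : Prop :=
  ∃ u v, edgeG' A w u v ∧ memV A w v ∧ C = classOf A w u ∧ D = classOf A w v

/-- `D` is a descendant of `C` in `T`: there is a (possibly empty) path from `C` to `D`. -/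
def DescC : Set (Q × ℕ) → Set (Q × ℕ) → Prop := Relation.ReflTransGen (childC A w)

/-- `C` is an `F`-class: all its members are `F`-nodes. -/
def IsFClass (C : Set (Q × ℕ)) : Prop := ∀ v ∈ C, v.1 ∈ A.F

/-- `h_C ≤ h_D` for classes `C`, `D` (members of a class all share one profile). -/
def profLE (C D : Set (Q × ℕ)) : Prop :=
  ∀ u ∈ C, ∀ v ∈ D, lexLE (profile A w u) (profile A w v)

/-- `h_C < h_D` for classes `C`, `D`. -/
def profLT (C D : Set (Q × ℕ)) : Prop :=
  ∀ u ∈ C, ∀ v ∈ D, lexLT (profile A w u) (profile A w v)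

/-- `C` (a class on level `i`) is before `D` (a class on level `j`):
`i < j`, or `i = j` and `h_C < h_D`. -/
def BeforeC (C : Set (Q × ℕ)) (i : ℕ) (D : Set (Q × ℕ)) (j : ℕ) : Prop :=
  i < j ∨ (i = j ∧ profLT A w C D)

/-- `C` (on level `i`) is `first(m)` for the labeling `gl`: the first class
(in the `before` order) labeled `m`. -/
def IsFirst (gl : Set (Q × ℕ) → ℕ) (m : ℕ) (C : Set (Q × ℕ)) (i : ℕ) : Prop :=
  ClassAt A w C i ∧ gl C = m ∧
    ∀ D j, ClassAt A w D j → gl D = m → ¬ BeforeC A w D j C i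

/-- `C` is a descendant of `first(m)` (for the labeling `gl`). -/
def DescFirst (gl : Set (Q × ℕ) → ℕ) (m : ℕ) (C : Set (Q × ℕ)) : Prop :=
  ∃ Fm j, IsFirst A w gl m Fm j ∧ DescC A w Fm C

/-- `C = lmd(m, i)` for the labeling `gl`: `C` is the class of lexicographically
minimal profile among the descendants of `first(m)` on level `i`. -/
def IsLmd (gl : Set (Q × ℕ) → ℕ) (m i : ℕ) (C : Set (Q × ℕ)) : Prop :=
  ClassAt A w C i ∧ DescFirst A w gl m C ∧
    ∀ D, ClassAt A w D i → DescFirst A w gl m D → profLE A w C D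

/-- `gl` is the global labeling of the profile tree `T`:
`gl(U₀) = 0` for the level-0 class; for every class `U` on level `i`,
if `labels(U) = {m ∣ U = lmd(m,i)}` is nonempty then `gl(U) = min(labels(U))`,
and otherwise `gl(U) = 1 + max{gl(W) ∣ W before U}`. -/
def GlSpec (gl : Set (Q × ℕ) → ℕ) : Prop :=
  (∀ C, ClassAt A w C 0 → gl C = 0) ∧
  ∀ C i, ClassAt A w C i →
    ((∃ m, IsLmd A w gl m i C) →
        IsLmd A w gl (gl C) i C ∧ ∀ m, IsLmd A w gl m i C → gl C ≤ m) ∧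
    ((¬ ∃ m, IsLmd A w gl m i C) →
        (∃ D j, ClassAt A w D j ∧ BeforeC A w D j C i ∧ gl C = gl D + 1) ∧
        ∀ D j, ClassAt A w D j → BeforeC A w D j C i → gl D < gl C)

/-!
Distinct classes on one level have distinct, hence strictly comparable, profiles; say `U ≺ W`.
If `labels(W) = ∅`, then `gl W` exceeds the label of every class before `W`, `U` among them.
Otherwise `W = lmd(m, i)` for `m = gl W`. If also `gl U = m`, either `U = lmd(m, i)` too, against
the minimality of `h_W`, or `labels(U) = ∅`; then `first(m)`, an ancestor of `W`, lies on an
earlier level, hence before `U`, forcing `m < gl U`, or it is `W` itself, which `U` precedes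
with the same label.
-/

lemma lexLT_iff_lt {a b : List ℕ} : lexLT a b ↔ a < b := Iff.rfl

lemma lexLE_iff_le {a b : List ℕ} : lexLE a b ↔ a ≤ b :=
  (le_iff_lt_or_eq (a := a) (b := b)).symm

section ProfileTree

variable {A w}

lemma ClassAt.exists_mem {C : Set (Q × ℕ)} {i : ℕ} (hC : ClassAt A w C i) :
    ∃ u ∈ C, u.2 = i := by
  obtain ⟨u, hu, rfl, rfl⟩ := hC
  exact ⟨u, ⟨hu, rfl, rfl⟩, rfl⟩

lemma ClassAt.eq_classOf {C : Set (Q × ℕ)} {i : ℕ} (hC : ClassAt A w C i) {u : Q × ℕ}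
    (hu : u ∈ C) : C = classOf A w u := by
  obtain ⟨u₀, -, -, rfl⟩ := hC
  obtain ⟨-, hlevel, hprofile⟩ := hu
  ext v
  simp only [classOf, Set.mem_ofPred_eq, hlevel, hprofile]

lemma ClassAt.level_eq {C : Set (Q × ℕ)} {i j : ℕ} (hi : ClassAt A w C i)
    (hj : ClassAt A w C j) : i = j := by
  obtain ⟨u, hu, rfl⟩ := hi.exists_mem
  obtain ⟨v, hv, rfl⟩ := hj.exists_mem
  obtain ⟨-, hlevel, -⟩ := hi.eq_classOf hu ▸ hv
  exact hlevel.symm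

lemma ClassAt.profile_eq {C : Set (Q × ℕ)} {i : ℕ} (hC : ClassAt A w C i) {u v : Q × ℕ}
    (hu : u ∈ C) (hv : v ∈ C) : profile A w u = profile A w v :=
  (hC.eq_classOf hv ▸ hu).2.2

lemma ClassAt.profLT_iff {C D : Set (Q × ℕ)} {i j : ℕ} (hC : ClassAt A w C i)
    (hD : ClassAt A w D j) {c d : Q × ℕ} (hc : c ∈ C) (hd : d ∈ D) :
    profLT A w C D ↔ profile A w c < profile A w d :=
  ⟨fun h ↦ h c hc d hd, fun h c' hc' d' hd' ↦ by
    rwa [lexLT_iff_lt, hC.profile_eq hc' hc, hD.profile_eq hd' hd]⟩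

lemma ClassAt.eq_or_profLT_or_profLT {U W : Set (Q × ℕ)} {i : ℕ} (hU : ClassAt A w U i)
    (hW : ClassAt A w W i) : U = W ∨ profLT A w U W ∨ profLT A w W U := by
  obtain ⟨u, hu, hui⟩ := hU.exists_mem
  obtain ⟨v, hv, hvi⟩ := hW.exists_mem
  rw [hU.profLT_iff hW hu hv, hW.profLT_iff hU hv hu]
  rcases lt_trichotomy (profile A w u) (profile A w v) with h | h | h
  · exact Or.inr (Or.inl h)
  · refine Or.inl ?_
    rw [hU.eq_classOf hu, hW.eq_classOf hv]
    ext x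
    simp only [classOf, Set.mem_ofPred_eq, hui, hvi, h]
  · exact Or.inr (Or.inr h)

lemma ClassAt.not_profLE_of_profLT {U W : Set (Q × ℕ)} {i j : ℕ} (hU : ClassAt A w U i)
    (hW : ClassAt A w W j) (h : profLT A w U W) : ¬ profLE A w W U := fun h' ↦ by
  obtain ⟨u, hu, -⟩ := hU.exists_mem
  obtain ⟨v, hv, -⟩ := hW.exists_mem
  exact (lexLE_iff_le.mp (h' v hv u hu)).not_gt (h u hu v hv)

lemma childC.classAt {C D : Set (Q × ℕ)} (h : childC A w C D) :
    ∃ i, ClassAt A w C i ∧ ClassAt A w D (i + 1) := by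
  obtain ⟨u, v, ⟨⟨hu, hlevel, -⟩, -⟩, hv, rfl, rfl⟩ := h
  exact ⟨u.2, ⟨u, hu, rfl, rfl⟩, ⟨v, hv, hlevel, rfl⟩⟩

lemma DescC.eq_or_level_lt {C D : Set (Q × ℕ)} {i j : ℕ} (h : DescC A w C D)
    (hC : ClassAt A w C i) (hD : ClassAt A w D j) : C = D ∨ i < j := by
  induction h generalizing j with
  | refl => exact Or.inl rfl
  | tail _ hchild ih =>
    obtain ⟨k, hparent, hchildAt⟩ := hchild.classAt
    have hk : i ≤ k := (ih hparent).elim (fun h ↦ (hC.level_eq (h ▸ hparent)).le) le_of_lt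
    exact Or.inr (hk.trans_lt ((hchildAt.level_eq hD) ▸ k.lt_succ_self))

lemma IsLmd.not_profLT {gl : Set (Q × ℕ) → ℕ} {m i : ℕ} {U W : Set (Q × ℕ)}
    (hU : IsLmd A w gl m i U) (hW : IsLmd A w gl m i W) : ¬ profLT A w U W := fun h ↦
  hU.1.not_profLE_of_profLT hW.1 h (hW.2.2 U hU.1 hU.2.1)

variable {gl : Set (Q × ℕ) → ℕ}

lemma GlSpec.isLmd_gl (hgl : GlSpec A w gl) {C : Set (Q × ℕ)} {i : ℕ} (hC : ClassAt A w C i)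
    (hlabels : ∃ m, IsLmd A w gl m i C) : IsLmd A w gl (gl C) i C :=
  ((hgl.2 C i hC).1 hlabels).1

lemma GlSpec.gl_lt_of_before (hgl : GlSpec A w gl) {C D : Set (Q × ℕ)} {i j : ℕ}
    (hC : ClassAt A w C i) (hlabels : ¬ ∃ m, IsLmd A w gl m i C) (hD : ClassAt A w D j)
    (hDC : BeforeC A w D j C i) : gl D < gl C :=
  ((hgl.2 C i hC).2 hlabels).2 D j hD hDC

lemma GlSpec.gl_ne_of_unlabeled_of_isLmd (hgl : GlSpec A w gl) {U W : Set (Q × ℕ)} {i : ℕ}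
    (hU : ClassAt A w U i) (hlabels : ¬ ∃ m, IsLmd A w gl m i U)
    (hW : IsLmd A w gl (gl W) i W) (h : profLT A w U W) : gl U ≠ gl W := by
  intro heq
  obtain ⟨first, j, ⟨hfirst, hfirst_gl, hfirst_min⟩, hdesc⟩ := hW.2.1
  rcases hdesc.eq_or_level_lt hfirst hW.1 with rfl | hj
  · obtain rfl := hfirst.level_eq hW.1
    exact hfirst_min U j hU (heq.trans hfirst_gl.symm) (Or.inr ⟨rfl, h⟩)
  · exact (hgl.gl_lt_of_before hU hlabels hfirst (Or.inl hj)).ne (hfirst_gl.trans heq.symm)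

lemma GlSpec.gl_ne_of_profLT (hgl : GlSpec A w gl) {U W : Set (Q × ℕ)} {i : ℕ}
    (hU : ClassAt A w U i) (hW : ClassAt A w W i) (h : profLT A w U W) : gl U ≠ gl W := by
  by_cases hWlabels : ∃ m, IsLmd A w gl m i W
  · have hWlmd := hgl.isLmd_gl hW hWlabels
    by_cases hUlabels : ∃ m, IsLmd A w gl m i U
    · intro heq
      exact (heq ▸ hgl.isLmd_gl hU hUlabels).not_profLT hWlmd h
    · exact hgl.gl_ne_of_unlabeled_of_isLmd hU hUlabels hWlmd h
  · exact (hgl.gl_lt_of_before hW hWlabels hU (Or.inr ⟨rfl, h⟩)).ne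

end ProfileTree

theorem gl_injective_on_level_general
    (A : NBW Alph Q) (w : ℕ → Alph) (gl : Set (Q × ℕ) → ℕ) (hgl : GlSpec A w gl)
    (i : ℕ) (U W : Set (Q × ℕ)) (hU : ClassAt A w U i) (hW : ClassAt A w W i)
    (hne : U ≠ W) : gl U ≠ gl W := by
  rcases hU.eq_or_profLT_or_profLT hW with h | h | h
  · exact (hne h).elim
  · exact hgl.gl_ne_of_profLT hU hW h
  · exact (hgl.gl_ne_of_profLT hW hU h).symm

/-- the global labeling assigns distinct labels to distinct classes
on the same level. -/
theorem gl_injective_on_level [Fintype Alph] [Fintype Q]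
    (A : NBW Alph Q) (w : ℕ → Alph) (gl : Set (Q × ℕ) → ℕ) (hgl : GlSpec A w gl)
    (i : ℕ) (U W : Set (Q × ℕ)) (hU : ClassAt A w U i) (hW : ClassAt A w W i)
    (hne : U ≠ W) : gl U ≠ gl W :=
  gl_injective_on_level_general A w gl hgl i U W hU hW hne
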